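/- arXiv:2501.03439 — 4 statements merged into one kernel-verified Lean document; each statement's English description precedes it below -/
import Mathlib

section
/- Let J be a finite directed graph with maximum out-degree D, and suppose D > m(J), where m(J) = max over nonempty subgraphs J' of e(J')/v(J') (ignoring orientations). Then the edge set of J can be partitioned into two spanning subdigraphs J' and F such that the maximum out-degree of J' is at most D-1, the maximum out-degree of F is at most 1, and the maximum total degree (in-degree plus out-degree) of F is at most ⌈D/(D - m(J))⌉. -/
/-!
Call a vertex full if its out-degree is `D`. It suffices to pick one out-edge at each full vertex
so that every vertex is picked at most `c = ⌈D / (D - m)⌉ - 1` times: these edges form `F`.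
By Hall's theorem (with every vertex duplicated `c` times) this is possible as soon as every set
`S` of full vertices has out-neighbourhood `N` with `|S| ≤ c |N|`. All `D |S|` edges leaving `S`
lie inside `S ∪ N`, so `D |S| ≤ m (|S| + |N|)`, i.e. `(D - m) |S| ≤ m |N| ≤ c (D - m) |N|`,
the last step being the choice of `c`.
-/

open Finset
open scoped Classical

/-- Out-degree of `v` in the digraph with edge set `E`. -/
noncomputable def outDeg {V : Type*} (E : Finset (V × V)) (v : V) : ℕ :=
  (E.filter (fun e => e.1 = v)).card

/-- In-degree of `v` in the digraph with edge set `E`. -/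
noncomputable def inDeg {V : Type*} (E : Finset (V × V)) (v : V) : ℕ :=
  (E.filter (fun e => e.2 = v)).card

/-- Number of edges of the digraph `E` lying inside the vertex set `S`. -/
noncomputable def dEdgesIn {V : Type*} (E : Finset (V × V)) (S : Finset V) : ℕ :=
  (E.filter (fun e => e.1 ∈ S ∧ e.2 ∈ S)).card

/-- The maximum density `m(J)` of a finite digraph, computed on the underlying graph. -/
noncomputable def dMaxDensity {V : Type*} [Fintype V] [Nonempty V] (E : Finset (V × V)) : ℝ :=
  ((Finset.univ : Finset (Finset V)).filter (fun S => S.Nonempty)).sup'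
    ⟨Finset.univ, by simp [Finset.univ_nonempty]⟩
    (fun S => (dEdgesIn E S : ℝ) / (S.card : ℝ))

theorem Nat.sub_one_le_cast_ceil_sub_one (x : ℝ) : x - 1 ≤ ((⌈x⌉₊ - 1 : ℕ) : ℝ) := by
  rcases Nat.eq_zero_or_pos ⌈x⌉₊ with h | h
  · rw [h, Nat.zero_sub, Nat.cast_zero]
    linarith [Nat.ceil_eq_zero.mp h]
  · rw [Nat.cast_sub h, Nat.cast_one]
    linarith [Nat.le_ceil x]

theorem le_natCeil_div_sub_sub_one_mul {m D : ℝ} (h : m < D) :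
    m ≤ ((⌈D / (D - m)⌉₊ - 1 : ℕ) : ℝ) * (D - m) := by
  have hDm : 0 < D - m := sub_pos.mpr h
  calc m = (D / (D - m) - 1) * (D - m) := by field_simp; ring
    _ ≤ _ := mul_le_mul_of_nonneg_right (Nat.sub_one_le_cast_ceil_sub_one _) hDm.le

section Combinatorics

variable {V : Type*}

noncomputable def outNbhd (E : Finset (V × V)) (v : V) : Finset V :=
  (E.filter (fun e => e.1 = v)).image Prod.snd

theorem mem_outNbhd {E : Finset (V × V)} {v w : V} : w ∈ outNbhd E v ↔ (v, w) ∈ E := by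
  simp [outNbhd]

noncomputable def graphOn (A : Finset V) (g : V → V) : Finset (V × V) :=
  A.image fun v => (v, g v)

theorem graphOn_subset {E : Finset (V × V)} {A : Finset V} {g : V → V}
    (hg : ∀ v ∈ A, g v ∈ outNbhd E v) : graphOn A g ⊆ E := by
  intro e he
  obtain ⟨v, hv, rfl⟩ := mem_image.mp he
  exact mem_outNbhd.mp (hg v hv)

theorem outDeg_graphOn (A : Finset V) (g : V → V) (v : V) :
    outDeg (graphOn A g) v = if v ∈ A then 1 else 0 := by
  rw [outDeg, graphOn, filter_image, card_image_of_injective _ fun a b h => (Prod.ext_iff.mp h).1]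
  split_ifs with hv
  · rw [card_eq_one]; exact ⟨v, by ext; simp only [mem_filter, mem_singleton]; grind⟩
  · rw [card_eq_zero, filter_eq_empty_iff]; grind

theorem inDeg_graphOn (A : Finset V) (g : V → V) (w : V) :
    inDeg (graphOn A g) w = (A.filter (g · = w)).card := by
  rw [inDeg, graphOn, filter_image, card_image_of_injective _ fun a b h => (Prod.ext_iff.mp h).1]

theorem outDeg_sdiff_add {E F : Finset (V × V)} (hFE : F ⊆ E) (v : V) :
    outDeg (E \ F) v + outDeg F v = outDeg E v := by
  conv_rhs => rw [← sdiff_union_of_subset hFE]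
  simp only [outDeg]
  rw [filter_union, card_union_of_disjoint (disjoint_filter_filter sdiff_disjoint)]

theorem outDeg_sdiff_graphOn_le {E : Finset (V × V)} {D : ℕ} (hD : ∀ v, outDeg E v ≤ D)
    {A : Finset V} (hA : ∀ v, outDeg E v = D → v ∈ A) {g : V → V} (hgE : graphOn A g ⊆ E)
    (v : V) : outDeg (E \ graphOn A g) v ≤ D - 1 := by
  have hsplit := outDeg_sdiff_add hgE v
  have hDv := hD v
  rw [outDeg_graphOn] at hsplit
  by_cases hv : v ∈ A
  · rw [if_pos hv] at hsplit
    omega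
  · rw [if_neg hv] at hsplit
    have := mt (hA v) hv
    omega

theorem sum_outDeg_le_dEdgesIn (E : Finset (V × V)) (S : Finset V) :
    ∑ v ∈ S, outDeg E v ≤ dEdgesIn E (S ∪ S.biUnion (outNbhd E)) := by
  calc ∑ v ∈ S, outDeg E v = (E.filter (·.1 ∈ S)).card := by
        rw [card_eq_sum_card_fiberwise (s := E.filter (·.1 ∈ S)) (f := Prod.fst) (t := S)
          fun e he => (mem_filter.mp he).2]
        refine sum_congr rfl fun v hv => ?_
        rw [filter_filter, outDeg]
        congr 1; ext e; simp only [mem_filter]; grind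
    _ ≤ _ := card_le_card fun e he => by
        rw [mem_filter] at he ⊢
        exact ⟨he.1, mem_union_left _ he.2,
          mem_union_right _ (mem_biUnion.mpr ⟨e.1, he.2, mem_outNbhd.mpr he.1⟩)⟩

end Combinatorics

theorem Finset.exists_choice_card_fiber_le_of_hall {V : Type*} (t : V → Finset V) (A : Finset V)
    (c : ℕ) (hall : ∀ S ⊆ A, S.card ≤ c * (S.biUnion t).card) :
    ∃ g : V → V, (∀ v ∈ A, g v ∈ t v) ∧ ∀ w, (A.filter (g · = w)).card ≤ c := by
  obtain ⟨f, hf_inj, hf_mem⟩ := (all_card_le_biUnion_card_iff_exists_injective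
    fun v : A => t v ×ˢ (univ : Finset (Fin c))).mp fun s => by
      have hbi : s.biUnion (fun v : A => t v ×ˢ (univ : Finset (Fin c))) =
          (s.map (Function.Embedding.subtype _)).biUnion t ×ˢ univ := by
        ext; simp
      rw [hbi, card_product, card_univ, Fintype.card_fin, mul_comm, ← card_map]
      exact hall _ fun v hv => by obtain ⟨w, -, rfl⟩ := mem_map.mp hv; exact w.2
  let g : V → V := fun v => if hv : v ∈ A then (f ⟨v, hv⟩).1 else v
  have hg : ∀ v (hv : v ∈ A), g v = (f ⟨v, hv⟩).1 := fun v hv => dif_pos hv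
  refine ⟨g, fun v hv => hg v hv ▸ (mem_product.mp (hf_mem ⟨v, hv⟩)).1, fun w => ?_⟩
  have hfst : ∀ v (hv : v ∈ A.filter (g · = w)), (f ⟨v, (mem_filter.mp hv).1⟩).1 = w :=
    fun v hv => (hg v _).symm.trans (mem_filter.mp hv).2
  rw [← Fintype.card_coe]
  refine (Fintype.card_le_of_injective (α := ↥(A.filter (g · = w)))
    (fun v => (f ⟨v, (mem_filter.mp v.2).1⟩).2) ?_).trans_eq (Fintype.card_fin c)
  rintro ⟨x, hx⟩ ⟨y, hy⟩ hxy
  simpa using hf_inj (Prod.ext ((hfst x hx).trans (hfst y hy).symm) hxy)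

section Density

variable {V : Type*} [Fintype V] [Nonempty V]

theorem dEdgesIn_le_dMaxDensity_mul (E : Finset (V × V)) (T : Finset V) :
    (dEdgesIn E T : ℝ) ≤ dMaxDensity E * T.card := by
  rcases T.eq_empty_or_nonempty with rfl | hT
  · simp [dEdgesIn]
  · rw [← div_le_iff₀ (by exact_mod_cast hT.card_pos)]
    exact le_sup' (fun S : Finset V => (dEdgesIn E S : ℝ) / S.card)
      (mem_filter.mpr ⟨mem_univ T, hT⟩)

theorem dMaxDensity_nonneg (E : Finset (V × V)) : 0 ≤ dMaxDensity E := by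
  have h := dEdgesIn_le_dMaxDensity_mul E univ
  have hpos : (0 : ℝ) < (univ : Finset V).card := by exact_mod_cast univ_nonempty.card_pos
  nlinarith [(dEdgesIn E univ).cast_nonneg (α := ℝ)]

theorem card_le_mul_card_outNbhd_of_le_outDeg (E : Finset (V × V)) {D : ℝ} {c : ℝ}
    (hmD : dMaxDensity E < D) (hc : dMaxDensity E ≤ c * (D - dMaxDensity E))
    {S : Finset V} (hS : ∀ v ∈ S, D ≤ outDeg E v) :
    (S.card : ℝ) ≤ c * (S.biUnion (outNbhd E)).card := by
  set m := dMaxDensity E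
  set N := S.biUnion (outNbhd E)
  have hedges : D * S.card ≤ m * (S.card + N.card) := calc
    D * S.card ≤ ∑ v ∈ S, (outDeg E v : ℝ) := by
      rw [mul_comm, ← nsmul_eq_mul, ← sum_const]; exact sum_le_sum hS
    _ ≤ dEdgesIn E (S ∪ N) := by exact_mod_cast sum_outDeg_le_dEdgesIn E S
    _ ≤ m * (S ∪ N).card := dEdgesIn_le_dMaxDensity_mul E _
    _ ≤ m * (S.card + N.card) := by
      gcongr
      · exact dMaxDensity_nonneg E
      · exact_mod_cast card_union_le S N
  have hDm : 0 < D - m := sub_pos.mpr hmD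
  refine le_of_mul_le_mul_left ?_ hDm
  nlinarith [mul_le_mul_of_nonneg_right hc (N.card.cast_nonneg (α := ℝ))]

end Density

theorem stmt_0_general {V : Type*} [Fintype V] [Nonempty V] (E : Finset (V × V)) (D : ℕ)
    (hD : ∀ v, outDeg E v ≤ D)
    (hm : dMaxDensity E < (D : ℝ)) :
    ∃ E' F : Finset (V × V), Disjoint E' F ∧ E' ∪ F = E ∧
      (∀ v, outDeg E' v ≤ D - 1) ∧ (∀ v, outDeg F v ≤ 1) ∧
      (∀ v, outDeg F v + inDeg F v ≤ ⌈(D : ℝ) / ((D : ℝ) - dMaxDensity E)⌉₊) := by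
  set m := dMaxDensity E
  set k := ⌈(D : ℝ) / ((D : ℝ) - m)⌉₊
  have hk : 1 ≤ k := Nat.one_le_ceil_iff.mpr
    (div_pos (by linarith [dMaxDensity_nonneg E]) (sub_pos.mpr hm))
  have hc : m ≤ ((k - 1 : ℕ) : ℝ) * (D - m) := le_natCeil_div_sub_sub_one_mul hm
  set A := univ.filter (outDeg E · = D)
  obtain ⟨g, hgE, hgc⟩ := exists_choice_card_fiber_le_of_hall (outNbhd E) A (k - 1)
    fun S hS => by
      exact_mod_cast card_le_mul_card_outNbhd_of_le_outDeg E hm hc fun v hv =>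
        ((mem_filter.mp (hS hv)).2.symm ▸ le_rfl)
  have hFE := graphOn_subset hgE
  refine ⟨E \ graphOn A g, graphOn A g, sdiff_disjoint, sdiff_union_of_subset hFE,
    outDeg_sdiff_graphOn_le hD (fun v hv => mem_filter.mpr ⟨mem_univ v, hv⟩) hFE,
    fun v => ?_, fun v => ?_⟩
  · rw [outDeg_graphOn]; split_ifs <;> simp
  · rw [outDeg_graphOn, inDeg_graphOn]
    have := hgc v
    split_ifs <;> omega

/-- directed decomposition lemma. If `J` is a finite digraph with maximum
out-degree `D > m(J)`, then `E(J)` decomposes as `J' ∪ F` with `Δ⁺(J') ≤ D - 1`, `Δ⁺(F) ≤ 1`,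
and the maximum total degree of `F` at most `⌈D / (D - m(J))⌉`. -/
theorem stmt_0 {V : Type*} [Fintype V] [Nonempty V] (E : Finset (V × V)) (D : ℕ)
    (hD : ∀ v, outDeg E v ≤ D) (hDex : ∃ v, outDeg E v = D)
    (hm : dMaxDensity E < (D : ℝ)) :
    ∃ E' F : Finset (V × V), Disjoint E' F ∧ E' ∪ F = E ∧
      (∀ v, outDeg E' v ≤ D - 1) ∧ (∀ v, outDeg F v ≤ 1) ∧
      (∀ v, outDeg F v + inDeg F v ≤ ⌈(D : ℝ) / ((D : ℝ) - dMaxDensity E)⌉₊) :=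
  stmt_0_general E D hD hm
end

section
/- Let H be a graph with at least 3 vertices whose 2-density d₂(H) = (e(H)-1)/(v(H)-2) satisfies d₂(H) ≥ k + ε for an integer k ≥ 1 and ε ∈ [0,1). Then one must delete at least C(k-1,2) + ε·(v(H) - 2) edges from H to obtain a k-degenerate spanning subgraph; that is, every k-degenerate subgraph H' of H satisfies e(H) - e(H') ≥ (k-1)(k-2)/2 + ε·(v(H) - 2). -/
/-!
Peeling off vertices of degree at most `k` one at a time until `k + 1` vertices remain, which span
at most `C(k + 1, 2)` edges, shows that a `k`-degenerate graph on `n ≥ k + 1` vertices has at most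
`k n - k (k + 1) / 2` edges. On the other hand `d₂(H) ≥ k + ε` means `e(H) ≥ (k + ε)(n - 2) + 1`, and
the difference of the two bounds is exactly `C(k - 1, 2) + ε (n - 2)`. The condition `n ≥ k + 1`
comes from `e(H) ≤ C(n, 2)`, which is incompatible with `e(H) ≥ n (n - 2) + 1` when `n ≥ 3`.
-/

open Finset
open scoped Classical

variable {V : Type*}

/-- Number of edges of the graph `G` lying inside the vertex set `S`. -/
noncomputable def edgesIn [Fintype V] (G : SimpleGraph V) (S : Finset V) : ℕ :=
  (G.edgeFinset.filter (fun e => ∀ v ∈ e, v ∈ S)).card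

/-- The maximum density `m(G) = max {e(G')/v(G') : ∅ ≠ G' ⊆ G}` of a finite graph. -/
noncomputable def maxDensity [Fintype V] [Nonempty V] (G : SimpleGraph V) : ℝ :=
  ((Finset.univ : Finset (Finset V)).filter (fun S => S.Nonempty)).sup'
    ⟨Finset.univ, by simp [Finset.univ_nonempty]⟩
    (fun S => (edgesIn G S : ℝ) / (S.card : ℝ))

/-- The maximum 2-density `m₂(G)`. -/
noncomputable def max2Density [Fintype V] (G : SimpleGraph V) : ℝ :=
  (insert ((1 : ℝ) / 2)
    (((Finset.univ : Finset (Finset V)).filter (fun S => 3 ≤ S.card)).image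
      (fun S => ((edgesIn G S : ℝ) - 1) / ((S.card : ℝ) - 2)))).sup'
    (Finset.insert_nonempty _ _) id

/-- Degree of `v` in the subgraph of `G` induced on `S`. -/
noncomputable def degIn [Fintype V] (G : SimpleGraph V) (S : Finset V) (v : V) : ℕ :=
  (S.filter (fun u => G.Adj v u)).card

/-- A graph is `d`-degenerate if every nonempty (induced) subgraph has a vertex of degree at most `d`. -/
def Degenerate [Fintype V] (d : ℕ) (G : SimpleGraph V) : Prop :=
  ∀ S : Finset V, S.Nonempty → ∃ v ∈ S, degIn G S v ≤ d

namespace SimpleGraph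

variable [Fintype V] (G : SimpleGraph V)

lemma mk_mem_filter_edgeFinset_iff {S : Finset V} {a b : V} :
    s(a, b) ∈ G.edgeFinset.filter (fun e => ∀ v ∈ e, v ∈ S) ↔ G.Adj a b ∧ a ∈ S ∧ b ∈ S := by
  simp

lemma edgesIn_univ : edgesIn G univ = #G.edgeFinset := by
  simp [edgesIn]

lemma edgesIn_le_choose_two (S : Finset V) : edgesIn G S ≤ (#S).choose 2 := by
  rw [← Sym2.card_image_offDiag]
  refine card_le_card fun e he => ?_
  induction e using Sym2.ind with
  | h a b =>
    obtain ⟨hab, ha, hb⟩ := (G.mk_mem_filter_edgeFinset_iff).1 he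
    exact mem_image.2 ⟨(a, b), mem_offDiag.2 ⟨ha, hb, hab.ne⟩, rfl⟩

lemma edgesIn_le_edgesIn_erase_add_degIn (S : Finset V) (v : V) :
    edgesIn G S ≤ edgesIn G (S.erase v) + degIn G S v := by
  have hsub : G.edgeFinset.filter (fun e => ∀ w ∈ e, w ∈ S) ⊆
      G.edgeFinset.filter (fun e => ∀ w ∈ e, w ∈ S.erase v) ∪
        (S.filter (G.Adj v)).image (fun u => s(v, u)) := by
    intro e he
    induction e using Sym2.ind with
    | h a b =>
      obtain ⟨hab, ha, hb⟩ := (G.mk_mem_filter_edgeFinset_iff).1 he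
      by_cases hva : v = a
      · subst hva; exact mem_union_right _ (mem_image.2 ⟨b, mem_filter.2 ⟨hb, hab⟩, rfl⟩)
      by_cases hvb : v = b
      · subst hvb
        exact mem_union_right _ (mem_image.2 ⟨a, mem_filter.2 ⟨ha, hab.symm⟩, Sym2.eq_swap⟩)
      exact mem_union_left _ ((G.mk_mem_filter_edgeFinset_iff).2
        ⟨hab, mem_erase.2 ⟨Ne.symm hva, ha⟩, mem_erase.2 ⟨Ne.symm hvb, hb⟩⟩)
  calc edgesIn G S ≤ _ := card_le_card hsub
    _ ≤ _ := card_union_le _ _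
    _ ≤ _ := Nat.add_le_add_left card_image_le _

lemma two_mul_card_edgeFinset_le :
    2 * (#G.edgeFinset : ℝ) ≤ Fintype.card V * (Fintype.card V - 1) := by
  have h : (#G.edgeFinset : ℝ) ≤ ((Fintype.card V).choose 2 : ℕ) := by
    exact_mod_cast G.card_edgeFinset_le_card_choose_two
  rw [Nat.cast_choose_two] at h
  linarith

end SimpleGraph

namespace Degenerate

variable [Fintype V] {G : SimpleGraph V} {k : ℕ}

lemma two_mul_edgesIn_add_le (hG : Degenerate k G) {S : Finset V} (hS : k + 1 ≤ #S) :
    2 * edgesIn G S + k * (k + 1) ≤ 2 * k * #S := by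
  induction S using Finset.strongInduction with
  | _ S ih =>
    obtain hcard | hcard := hS.eq_or_lt
    · have h := G.edgesIn_le_choose_two S
      rw [← hcard, Nat.choose_two_right, Nat.add_sub_cancel] at h
      have := Nat.div_mul_le_self ((k + 1) * k) 2
      rw [← hcard]
      nlinarith
    · obtain ⟨v, hv, hdeg⟩ := hG S (card_pos.1 (by omega))
      have hstep := G.edgesIn_le_edgesIn_erase_add_degIn S v
      have hrest := ih (S.erase v) (erase_ssubset hv) (by rw [card_erase_of_mem hv]; omega)
      rw [card_erase_of_mem hv] at hrest
      have : 2 * k * (#S - 1) + 2 * k = 2 * k * #S := by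
        rw [← Nat.mul_succ]; congr 1; omega
      omega

lemma two_mul_card_edgeFinset_add_le (hG : Degenerate k G) (hV : k + 1 ≤ Fintype.card V) :
    2 * #G.edgeFinset + k * (k + 1) ≤ 2 * k * Fintype.card V := by
  simpa [SimpleGraph.edgesIn_univ] using hG.two_mul_edgesIn_add_le (S := univ) (by simpa)

end Degenerate

theorem stmt_8_general [Fintype V] (H H' : SimpleGraph V) (hcard : 3 ≤ Fintype.card V)
    (k : ℕ) (ε : ℝ) (hε0 : 0 ≤ ε)
    (hd2 : (k : ℝ) + ε ≤ ((H.edgeFinset.card : ℝ) - 1) / ((Fintype.card V : ℝ) - 2))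
    (hdeg : Degenerate k H') :
    ((k : ℝ) - 1) * ((k : ℝ) - 2) / 2 + ε * ((Fintype.card V : ℝ) - 2)
      ≤ (H.edgeFinset.card : ℝ) - (H'.edgeFinset.card : ℝ) := by
  set n := Fintype.card V
  have hn : (3 : ℝ) ≤ n := by exact_mod_cast hcard
  have hH : (k + ε) * (n - 2) + 1 ≤ (#H.edgeFinset : ℝ) := by
    linarith [(le_div_iff₀ (by linarith : (0 : ℝ) < n - 2)).1 hd2]
  have hkn : k + 1 ≤ n := by
    by_contra! hnk
    have : (n : ℝ) ≤ k := by exact_mod_cast Nat.lt_succ_iff.1 hnk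
    nlinarith [H.two_mul_card_edgeFinset_le]
  have hH' : 2 * (#H'.edgeFinset : ℝ) + k * (k + 1) ≤ 2 * k * n := by
    exact_mod_cast hdeg.two_mul_card_edgeFinset_add_le hkn
  linarith

/-- If `d₂(H) ≥ k + ε` then every `k`-degenerate subgraph `H'` of `H` satisfies
`e(H) - e(H') ≥ (k-1)(k-2)/2 + ε (v(H) - 2)`. -/
theorem stmt_8 [Fintype V] (H H' : SimpleGraph V) (hcard : 3 ≤ Fintype.card V)
    (k : ℕ) (hk : 1 ≤ k) (ε : ℝ) (hε0 : 0 ≤ ε) (hε1 : ε < 1)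
    (hd2 : (k : ℝ) + ε ≤ ((H.edgeFinset.card : ℝ) - 1) / ((Fintype.card V : ℝ) - 2))
    (hsub : H' ≤ H) (hdeg : Degenerate k H') :
    ((k : ℝ) - 1) * ((k : ℝ) - 2) / 2 + ε * ((Fintype.card V : ℝ) - 2)
      ≤ (H.edgeFinset.card : ℝ) - (H'.edgeFinset.card : ℝ) :=
  stmt_8_general H H' hcard k ε hε0 hd2 hdeg
end

section
/- For every real m ≥ 18, with k = ⌊m⌋, K = ⌊2m⌋, and r = Σ_{i=k+2}^{K} ⌈i/(i - m)⌉, the inequality C(k-1, 2) > k + 2 + r holds, where C(k-1,2) = (k-1)(k-2)/2. -/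
open Finset
open scoped Classical

/-!
With `k = ⌊m⌋` and `K ≤ 2k + 1`, each term satisfies `⌈i/(i - m)⌉ ≤ 2 + (k+1)/(i - k - 1)`, so
`r ≤ 2k + (k+1) H_k ≤ 2k + (k+1)(1 + log k)`. Comparing `log` with a tangent line at `18`
gives `log k < k/18 + 2`, leaving a quadratic inequality in `k` that holds for `k ≥ 18`.
-/

open Real

lemma natFloor_two_mul_le {m : ℝ} (hm : 0 ≤ m) : ⌊2 * m⌋₊ ≤ 2 * ⌊m⌋₊ + 1 := by
  have : ⌊2 * m⌋₊ < 2 * ⌊m⌋₊ + 2 := by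
    rw [Nat.floor_lt (by positivity)]
    push_cast
    linarith [Nat.lt_floor_add_one m]
  omega

lemma natCeil_div_sub_le {m : ℝ} {i : ℕ} (hi : ⌊m⌋₊ + 2 ≤ i) :
    (⌈(i : ℝ) / (i - m)⌉₊ : ℝ) ≤ 2 + (⌊m⌋₊ + 1) / (i - (⌊m⌋₊ + 1)) := by
  have hmk : m < ⌊m⌋₊ + 1 := Nat.lt_floor_add_one m
  have hi' : (⌊m⌋₊ : ℝ) + 2 ≤ i := by exact_mod_cast hi
  have hsub : 0 < (i : ℝ) - m := by linarith
  calc (⌈(i : ℝ) / (i - m)⌉₊ : ℝ)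
      ≤ i / (i - m) + 1 := (Nat.ceil_lt_add_one (by positivity)).le
    _ = 2 + m / (i - m) := by field_simp; ring
    _ ≤ 2 + (⌊m⌋₊ + 1) / (i - (⌊m⌋₊ + 1)) := by
      gcongr
      all_goals linarith

lemma sum_Icc_div_sub_eq_mul_harmonic (k : ℕ) :
    ∑ i ∈ Icc (k + 2) (2 * k + 1), ((k : ℝ) + 1) / (i - (k + 1)) = (k + 1) * harmonic k := by
  rw [← Ico_add_one_right_eq_Icc, sum_Ico_eq_sum_range, harmonic]
  push_cast
  rw [mul_sum]
  refine sum_congr (by congr 1; omega) fun j _ => ?_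
  ring

lemma log_le_div_add_log_sub_one {a x : ℝ} (ha : 0 < a) (hx : 0 < x) :
    log x ≤ x / a + log a - 1 := by
  have := log_le_sub_one_of_pos (div_pos hx ha)
  rw [log_div hx.ne' ha.ne'] at this
  linarith

lemma log_eighteen_lt_three : log 18 < 3 := by
  rw [log_lt_iff_lt_exp (by norm_num), show (3 : ℝ) = 1 + 1 + 1 by norm_num, exp_add, exp_add]
  have := exp_one_gt_d9
  nlinarith [exp_pos 1]

lemma sum_natCeil_div_sub_le {m : ℝ} (hm : 0 ≤ m) :
    (∑ i ∈ Icc (⌊m⌋₊ + 2) ⌊2 * m⌋₊, ⌈(i : ℝ) / (i - m)⌉₊ : ℝ)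
      ≤ 2 * ⌊m⌋₊ + (⌊m⌋₊ + 1) * (1 + log ⌊m⌋₊) := by
  set k := ⌊m⌋₊
  calc (∑ i ∈ Icc (k + 2) ⌊2 * m⌋₊, ⌈(i : ℝ) / (i - m)⌉₊ : ℝ)
      ≤ ∑ i ∈ Icc (k + 2) ⌊2 * m⌋₊, (2 + ((k : ℝ) + 1) / (i - (k + 1))) :=
        sum_le_sum fun i hi => natCeil_div_sub_le (mem_Icc.1 hi).1
    _ ≤ ∑ i ∈ Icc (k + 2) (2 * k + 1), (2 + ((k : ℝ) + 1) / (i - (k + 1))) := by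
        refine sum_le_sum_of_subset_of_nonneg (Icc_subset_Icc_right (natFloor_two_mul_le hm))
          fun i hi _ => ?_
        have : (k : ℝ) + 2 ≤ i := by exact_mod_cast (mem_Icc.1 hi).1
        have : (0 : ℝ) < i - (k + 1) := by linarith
        positivity
    _ = 2 * k + (k + 1) * harmonic k := by
        rw [sum_add_distrib, sum_Icc_div_sub_eq_mul_harmonic, sum_const, Nat.card_Icc,
          show 2 * k + 1 + 1 - (k + 2) = k by omega]
        ring
    _ ≤ 2 * k + (k + 1) * (1 + log k) := by
        gcongr
        exact harmonic_le_one_add_log k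

/-- For `m ≥ 18`, `k = ⌊m⌋`, `K = ⌊2m⌋` and
`r = ∑_{i = k+2}^{K} ⌈i/(i - m)⌉`, one has `C(k-1, 2) > k + 2 + r`. -/
theorem stmt_10 (m : ℝ) (hm : 18 ≤ m) :
    ⌊m⌋₊ + 2 + ∑ i ∈ Finset.Icc (⌊m⌋₊ + 2) ⌊2 * m⌋₊, ⌈(i : ℝ) / ((i : ℝ) - m)⌉₊
      < (⌊m⌋₊ - 1).choose 2 := by
  set k := ⌊m⌋₊
  have hk : (18 : ℝ) ≤ k := by exact_mod_cast Nat.le_floor (by exact_mod_cast hm)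
  have hr := sum_natCeil_div_sub_le (by linarith : 0 ≤ m)
  have hlog : log k < k / 18 + 2 := by
    linarith [log_le_div_add_log_sub_one (by norm_num : (0 : ℝ) < 18) (by linarith : (0 : ℝ) < k),
      log_eighteen_lt_three]
  have hk1 : 1 ≤ k := by exact_mod_cast (by linarith : (1 : ℝ) ≤ k)
  rw [← Nat.cast_lt (α := ℝ)]
  push_cast [Nat.cast_choose_two, hk1]
  -- the difference of the two sides is at least (4/9)(k² - 17k - 9)
  nlinarith
end

section
/- For every real m > 0, with k = ⌊m⌋ and K = ⌊2m⌋, the sum r = Σ_{i=k+2}^{K} ⌈i/(i - m)⌉ satisfies r ≤ 2k + (k+1)(1 + log k) when k ≥ 2. -/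
/-!
Writing `i / (i - m) = 1 + m / (i - m)`, each term is at most `2 + (k + 1) / (i - (k + 1))`.
Since `⌊2m⌋₊ ≤ 2k + 1`, there are `n ≤ k` terms, and the second parts add up to `(k + 1)` times
the harmonic number `H_n ≤ 1 + log n`.
-/

open Finset

lemma Nat.two_mul_floor_le_floor_two_mul {m : ℝ} (hm : 0 ≤ m) : 2 * ⌊m⌋₊ ≤ ⌊2 * m⌋₊ :=
  Nat.le_floor (by push_cast; linarith [Nat.floor_le hm])

lemma Nat.floor_two_mul_le (m : ℝ) : ⌊2 * m⌋₊ ≤ 2 * ⌊m⌋₊ + 1 := by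
  rcases lt_or_ge m 0 with hm | hm
  · simp [Nat.floor_of_nonpos (by linarith : 2 * m ≤ 0)]
  have h : 2 * m < ((2 * ⌊m⌋₊ + 2 : ℕ) : ℝ) := by
    push_cast; linarith [Nat.lt_floor_add_one m]
  have := (Nat.floor_lt (by positivity)).mpr h
  omega

lemma Nat.ceil_div_sub_le_two_add {m c x : ℝ} (hm : 0 ≤ m) (hmc : m ≤ c) (hcx : c < x) :
    (⌈x / (x - m)⌉₊ : ℝ) ≤ 2 + c / (x - c) := by
  have hxm : 0 < x - m := by linarith
  have hceil := Nat.ceil_lt_add_one (div_nonneg (by linarith) hxm.le : 0 ≤ x / (x - m))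
  have hsplit : x / (x - m) = 1 + m / (x - m) := by field_simp; ring
  have hmono : m / (x - m) ≤ c / (x - c) :=
    div_le_div₀ (by linarith) hmc (by linarith) (by linarith)
  linarith

lemma sum_Icc_div_sub_le_mul_one_add_log (c n : ℕ) :
    ∑ i ∈ Icc (1 + c) (n + c), (c : ℝ) / (i - c) ≤ c * (1 + Real.log n) := by
  have hharmonic : ∑ j ∈ Icc 1 n, (j : ℝ)⁻¹ ≤ 1 + Real.log n := by
    simpa [harmonic_eq_sum_Icc] using harmonic_le_one_add_log n
  rw [← map_add_right_Icc, sum_map]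
  simp only [addRightEmbedding_apply, Nat.cast_add, add_sub_cancel_right, div_eq_mul_inv,
    ← mul_sum]
  gcongr

theorem stmt_11_general (m : ℝ) (hk : 2 ≤ ⌊m⌋₊) :
    ((∑ i ∈ Finset.Icc (⌊m⌋₊ + 2) ⌊2 * m⌋₊, ⌈(i : ℝ) / ((i : ℝ) - m)⌉₊ : ℕ) : ℝ)
      ≤ 2 * (⌊m⌋₊ : ℝ) + ((⌊m⌋₊ : ℝ) + 1) * (1 + Real.log (⌊m⌋₊ : ℝ)) := by
  set k := ⌊m⌋₊
  have hm : 0 ≤ m := by linarith [Nat.floor_pos.mp (by omega : 0 < k)]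
  have hKlow : 2 * k ≤ ⌊2 * m⌋₊ := Nat.two_mul_floor_le_floor_two_mul hm
  have hKup : ⌊2 * m⌋₊ ≤ 2 * k + 1 := Nat.floor_two_mul_le m
  obtain ⟨n, hK⟩ : ∃ n, ⌊2 * m⌋₊ = n + (k + 1) := ⟨⌊2 * m⌋₊ - (k + 1), by omega⟩
  rw [hK, show k + 2 = 1 + (k + 1) by ring]
  have hterm : ∀ i ∈ Icc (1 + (k + 1)) (n + (k + 1)),
      (⌈(i : ℝ) / (i - m)⌉₊ : ℝ) ≤ 2 + ((k + 1 : ℕ) : ℝ) / (i - (k + 1 : ℕ)) := by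
    intro i hi
    have hi : k + 2 ≤ i := by simp only [mem_Icc] at hi; omega
    exact Nat.ceil_div_sub_le_two_add hm (by push_cast; linarith [Nat.lt_floor_add_one m])
      (by exact_mod_cast hi)
  calc ((∑ i ∈ Icc (1 + (k + 1)) (n + (k + 1)), ⌈(i : ℝ) / (i - m)⌉₊ : ℕ) : ℝ)
      ≤ ∑ i ∈ Icc (1 + (k + 1)) (n + (k + 1)), (2 + ((k + 1 : ℕ) : ℝ) / (i - (k + 1 : ℕ))) := by
        rw [Nat.cast_sum]; exact sum_le_sum hterm
    _ ≤ 2 * n + (k + 1) * (1 + Real.log n) := by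
        rw [sum_add_distrib, sum_const, Nat.card_Icc,
          show n + (k + 1) + 1 - (1 + (k + 1)) = n by omega, nsmul_eq_mul]
        have := sum_Icc_div_sub_le_mul_one_add_log (k + 1) n
        push_cast at this ⊢
        linarith
    _ ≤ 2 * k + (k + 1) * (1 + Real.log k) := by
        have hn : 0 < n := by omega
        gcongr <;> omega

/-- For `m > 0` with `k = ⌊m⌋ ≥ 2` and `K = ⌊2m⌋`, the sum
`r = ∑_{i = k+2}^{K} ⌈i/(i - m)⌉` satisfies `r ≤ 2k + (k+1)(1 + log k)`. -/
theorem stmt_11 (m : ℝ) (hm : 0 < m) (hk : 2 ≤ ⌊m⌋₊) :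
    ((∑ i ∈ Finset.Icc (⌊m⌋₊ + 2) ⌊2 * m⌋₊, ⌈(i : ℝ) / ((i : ℝ) - m)⌉₊ : ℕ) : ℝ)
      ≤ 2 * (⌊m⌋₊ : ℝ) + ((⌊m⌋₊ : ℝ) + 1) * (1 + Real.log (⌊m⌋₊ : ℝ)) :=
  stmt_11_general m hk
end
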